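/- Let X be an alphabet having n letters and let g: X* → X* be a morphism. If g is growing and loop-free, then PER(g^d(x)) ≥ (1/(2·M_g^n))·|g^d(x)| whenever x ∈ X is a letter and d is a positive integer. -/

import Mathlib

open Filter Set

variable {X : Type*}

/-- Apply the morphism with letter images `g` to a word. -/
def applyM (g : X → List X) (w : List X) : List X := w.flatMap g

/-- `iterM g k w` is `g^k(w)`. -/
def iterM (g : X → List X) (k : ℕ) (w : List X) : List X := (applyM g)^[k] w

/-- The letter map of the composition `g ∘ h` (first `h`, then `g`). -/
def compM (g h : X → List X) : X → List X := fun a => applyM g (h a)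

/-- The letter map of the power `g^k`. -/
def powM (g : X → List X) (k : ℕ) : X → List X := fun a => iterM g k [a]

/-- A morphism is primitive if some power maps every letter to a word containing every letter. -/
def Primitive (g : X → List X) : Prop := ∃ k : ℕ, 0 < k ∧ ∀ a b : X, a ∈ iterM g k [b]

/-- `Mg g` is the maximal length of the image of a letter. -/
def Mg [Fintype X] (g : X → List X) : ℕ := Finset.univ.sup fun x => (g x).length

/-- A morphism is growing if the lengths of iterated images of every letter tend to infinity. -/
def Growing (g : X → List X) : Prop :=
  ∀ x : X, Tendsto (fun i => (iterM g i [x]).length) atTop atTop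

/-- `w` is a (finite) prefix of the infinite word `s`. -/
def IsPrefI (w : List X) (s : ℕ → X) : Prop := ∀ i (h : i < w.length), w[i]'h = s i

/-- `v` is a factor of the infinite word `s`. -/
def IsFactorI (v : List X) (s : ℕ → X) : Prop :=
  ∃ j : ℕ, ∀ i (h : i < v.length), v[i]'h = s (j + i)

/-- `g^ω(x)` exists. -/
def OmegaExists (g : X → List X) (x : X) : Prop :=
  [x] <+: g x ∧ Tendsto (fun i => (iterM g i [x]).length) atTop atTop

/-- `s = g^ω(x)`. -/
def IsOmega (g : X → List X) (x : X) (s : ℕ → X) : Prop :=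
  OmegaExists g x ∧ ∀ i : ℕ, IsPrefI (iterM g i [x]) s

/-- `s = u^ω` for the nonempty word `u`. -/
def IsPeriodicWord (s : ℕ → X) (u : List X) : Prop :=
  u ≠ [] ∧ ∀ (i : ℕ) (h : i % u.length < u.length), s i = u[i % u.length]'h

/-- A morphism is looping. -/
def Looping (g : X → List X) : Prop :=
  ∃ k : ℕ, 0 < k ∧ ∃ x : X, ∃ u : List X, ∃ s : ℕ → X,
    IsOmega (powM g k) x s ∧ IsPeriodicWord s u

/-- A morphism is loop-free if it is not looping. -/
def LoopFree (g : X → List X) : Prop := ¬ Looping g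

/-- `p` is a period of `u`. -/
def HasPeriod (u : List X) (p : ℕ) : Prop :=
  0 < p ∧ ∀ i : ℕ, i + p < u.length → u[i + p]? = u[i]?

/-- The smallest period of `u`. -/
noncomputable def PER (u : List X) : ℕ := sInf {p | HasPeriod u p}

/-- A primitive word: nonempty and not a proper power of a shorter word. -/
def PrimitiveWord (u : List X) : Prop :=
  u ≠ [] ∧ ¬∃ (v : List X) (j : ℕ), 2 ≤ j ∧ v.length < u.length ∧
    u = (List.replicate j v).flatten

/-- `COMP g h` : the set of words whose images under `g` and `h` are prefix-comparable. -/
def COMP (g h : X → List X) : Set (List X) :=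
  {w | ∃ u₁ u₂ : List X, applyM g w ++ u₁ = applyM h w ++ u₂}

/-- `BAL g h`. -/
noncomputable def BAL (g h : X → List X) : ℕ∞ :=
  ⨆ (x : X) (k : ℕ),
    ((((applyM g (iterM g k [x])).length : ℤ) -
      ((applyM h (iterM g k [x])).length : ℤ)).natAbs : ℕ∞)

/-- The set of factors of length `q` of the word `w`. -/
def Fq (q : ℕ) (w : List X) : Set (List X) := {v | v.length = q ∧ v <:+: w}

/-- The set of factors of length `q` of words of `L`. -/
def FqL (q : ℕ) (L : Set (List X)) : Set (List X) := ⋃ w ∈ L, Fq q w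

/-- `A n = ⌊9 n³ √(n log n)⌋`. -/
noncomputable def Abound (n : ℕ) : ℕ := ⌊9 * (n : ℝ)^3 * Real.sqrt (n * Real.log n)⌋₊

/-! If `2 p M^n < |g^d(x)|` with `p = PER(g^d(x))`, follow from `x` a path of letters, each one a
heaviest letter in the image of the previous one: the image of the `j`-th letter under `g^(d-j)`
still has length at least `|g^d(x)| / M^j`. Among the first `n + 1` letters of the path one
repeats, `b = z_A = z_B`, so `V = g^(d-A)(b)` is a factor of `g^d(x)`, hence has period `p`, it is
a factor of `g^k(V)` with `k = B - A`, and `|V| ≥ p (M^k + 1)`. The word `g^k(V)` has the period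
`|g^k(V[0, p))| ≤ M^k p`, and its factor `V`, which is long enough to hold both periods, forces
period `p` on all of `g^k(V)`; iterating, every `g^(km)(V)` has period `p`. A letter heading two of
these words generates the fixed point of a power of `g`, and that fixed point has period `p`:
`g` is looping. -/

def NonErasing (g : X → List X) : Prop := ∀ y, g y ≠ []

section Morphisms

variable {g : X → List X}

lemma applyM_append (g : X → List X) (u v : List X) :
    applyM g (u ++ v) = applyM g u ++ applyM g v :=
  List.flatMap_append

lemma applyM_singleton (g : X → List X) (y : X) : applyM g [y] = g y := by
  simp [applyM]

lemma iterM_succ (g : X → List X) (k : ℕ) (w : List X) :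
    iterM g (k + 1) w = iterM g k (applyM g w) :=
  Function.iterate_succ_apply _ _ _

lemma iterM_succ' (g : X → List X) (k : ℕ) (w : List X) :
    iterM g (k + 1) w = applyM g (iterM g k w) :=
  Function.iterate_succ_apply' _ _ _

lemma iterM_add (g : X → List X) (a b : ℕ) (w : List X) :
    iterM g (a + b) w = iterM g a (iterM g b w) :=
  Function.iterate_add_apply _ _ _ _

lemma iterM_append (g : X → List X) (k : ℕ) (u v : List X) :
    iterM g k (u ++ v) = iterM g k u ++ iterM g k v := by
  induction k generalizing u v with
  | zero => rfl
  | succ k ih => rw [iterM_succ, iterM_succ, iterM_succ, applyM_append, ih]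

lemma iterM_eq_flatMap (g : X → List X) (k : ℕ) (w : List X) :
    iterM g k w = w.flatMap fun y => iterM g k [y] := by
  induction w with
  | nil => induction k with
    | zero => rfl
    | succ k ih => rw [iterM_succ]; exact ih
  | cons y w ih => rw [← List.singleton_append, iterM_append, ih, List.flatMap_append]; simp

lemma iterM_powM (g : X → List X) (k i : ℕ) (w : List X) :
    iterM (powM g k) i w = iterM g (k * i) w := by
  induction i with
  | zero => rfl
  | succ i ih =>
    rw [iterM_succ', ih, Nat.mul_succ, Nat.add_comm, iterM_add, iterM_eq_flatMap g k]
    rfl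

lemma prefix_iterM {u v : List X} (h : u <+: v) (g : X → List X) (k : ℕ) :
    iterM g k u <+: iterM g k v := by
  obtain ⟨t, rfl⟩ := h
  exact ⟨_, (iterM_append g k u t).symm⟩

lemma infix_iterM {u v : List X} (h : u <:+: v) (g : X → List X) (k : ℕ) :
    iterM g k u <:+: iterM g k v := by
  obtain ⟨s, t, rfl⟩ := h
  exact ⟨_, _, by rw [iterM_append, iterM_append]⟩

lemma iterM_singleton_infix_of_mem (g : X → List X) {y : X} {w : List X} (h : y ∈ w) (k : ℕ) :
    iterM g k [y] <:+: iterM g k w :=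
  infix_iterM ((List.singleton_infix_iff y w).2 h) g k

lemma mem_iterM_succ {y z : X} {k : ℕ} {w : List X} (hy : y ∈ iterM g k w) (hz : z ∈ g y) :
    z ∈ iterM g (k + 1) w := by
  rw [iterM_succ']
  exact List.mem_flatMap.2 ⟨y, hy, hz⟩

lemma Growing.nonErasing (hg : Growing g) : NonErasing g := by
  intro y hy
  obtain ⟨i, hi⟩ := ((hg y).eventually_gt_atTop 0).exists_forall_of_atTop
  have hnil : iterM g (i + 1) [y] = [] := by
    rw [iterM_succ, applyM_singleton, hy, iterM_eq_flatMap]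
    rfl
  simpa [hnil] using hi (i + 1) (by omega)

lemma NonErasing.iterM_ne_nil (hg : NonErasing g) {w : List X} (hw : w ≠ []) (k : ℕ) :
    iterM g k w ≠ [] := by
  induction k with
  | zero => exact hw
  | succ k ih =>
    obtain ⟨y, hy⟩ := List.exists_mem_of_ne_nil _ ih
    obtain ⟨z, hz⟩ := List.exists_mem_of_ne_nil _ (hg y)
    exact List.ne_nil_of_mem (mem_iterM_succ hy hz)

lemma NonErasing.length_le_length_iterM (hg : NonErasing g) (w : List X) (k : ℕ) :
    w.length ≤ (iterM g k w).length := by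
  rw [iterM_eq_flatMap, List.length_flatMap]
  have h := List.length_le_sum_of_one_le (w.map fun y => (iterM g k [y]).length) fun n hn => by
    obtain ⟨y, -, rfl⟩ := List.mem_map.1 hn
    exact List.length_pos_iff.2 (hg.iterM_ne_nil (List.cons_ne_nil y []) k)
  rwa [List.length_map] at h

lemma length_le_Mg [Fintype X] (g : X → List X) (y : X) : (g y).length ≤ Mg g :=
  Finset.le_sup (f := fun y => (g y).length) (Finset.mem_univ y)

lemma NonErasing.Mg_pos [Fintype X] (hg : NonErasing g) (y : X) : 0 < Mg g :=
  (List.length_pos_iff.2 (hg y)).trans_le (length_le_Mg g y)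

lemma length_iterM_le_of_forall_le {k B : ℕ} {w : List X}
    (h : ∀ y ∈ w, (iterM g k [y]).length ≤ B) : (iterM g k w).length ≤ w.length * B := by
  rw [iterM_eq_flatMap, List.length_flatMap]
  have h' := List.sum_le_card_nsmul (w.map fun y => (iterM g k [y]).length) B fun n hn => by
    obtain ⟨y, hy, rfl⟩ := List.mem_map.1 hn
    exact h y hy
  rwa [List.length_map, smul_eq_mul] at h'

lemma length_applyM_le [Fintype X] (g : X → List X) (w : List X) :
    (applyM g w).length ≤ w.length * Mg g := by
  simpa [iterM] using length_iterM_le_of_forall_le (g := g) (k := 1) (w := w) fun y _ => by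
    simpa [iterM, applyM_singleton] using length_le_Mg g y

lemma length_iterM_le [Fintype X] (g : X → List X) (k : ℕ) (w : List X) :
    (iterM g k w).length ≤ Mg g ^ k * w.length := by
  induction k generalizing w with
  | zero => simp [iterM]
  | succ k ih =>
    calc (iterM g (k + 1) w).length ≤ Mg g ^ k * (applyM g w).length := by
          rw [iterM_succ]; exact ih _
      _ ≤ Mg g ^ k * (w.length * Mg g) := Nat.mul_le_mul_left _ (length_applyM_le g w)
      _ = Mg g ^ (k + 1) * w.length := by ring

lemma exists_mem_length_iterM_le (g : X → List X) (k : ℕ) {w : List X} (hw : w ≠ []) :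
    ∃ y ∈ w, (iterM g k w).length ≤ w.length * (iterM g k [y]).length := by
  classical
  obtain ⟨y, hy, hmax⟩ := w.toFinset.exists_max_image (fun y => (iterM g k [y]).length)
    (List.toFinset_nonempty_iff w |>.2 hw)
  exact ⟨y, List.mem_toFinset.1 hy, length_iterM_le_of_forall_le fun z hz =>
    hmax z (List.mem_toFinset.2 hz)⟩

end Morphisms

section Periods

variable {g : X → List X}

lemma hasPeriod_iff_list_hasPeriod {u : List X} {p : ℕ} :
    HasPeriod u p ↔ 0 < p ∧ u.HasPeriod p := by
  rw [List.hasPeriod_iff_getElem?]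
  exact and_congr_right fun _ =>
    ⟨fun h i hi => (h i (by omega)).symm, fun h i hi => (h i (by omega)).symm⟩

lemma HasPeriod.infix {u v : List X} {p : ℕ} (h : HasPeriod u p) (hv : v <:+: u) :
    HasPeriod v p := by
  rw [hasPeriod_iff_list_hasPeriod] at h ⊢
  exact ⟨h.1, h.2.infix hv⟩

lemma HasPeriod.prefix {u v : List X} {p : ℕ} (h : HasPeriod u p) (hv : v <+: u) :
    HasPeriod v p :=
  h.infix hv.isInfix

lemma hasPeriod_PER {u : List X} (hu : u ≠ []) : HasPeriod u (PER u) :=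
  Nat.sInf_mem (s := {p | HasPeriod u p})
    ⟨u.length, List.length_pos_iff.2 hu, fun i hi => by omega⟩

lemma HasPeriod.getElem?_eq_of_modEq {u : List X} {p i j : ℕ} (h : HasPeriod u p)
    (hij : i ≡ j [MOD p]) (hi : i < u.length) (hj : j < u.length) : u[i]? = u[j]? := by
  have hu := (hasPeriod_iff_list_hasPeriod.1 h).2
  rw [← hu.getElem?_mod p i u hi, ← hu.getElem?_mod p j u hj]
  exact congrArg (u[·]?) hij

lemma exists_modEq_of_le_lt_add (i a : ℕ) {q : ℕ} (hq : 0 < q) :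
    ∃ j, a ≤ j ∧ j < a + q ∧ j ≡ i [MOD q] := by
  have haq : a ≤ q * a := Nat.le_mul_of_pos_left a hq
  have hr := Nat.mod_lt (i + q * a - a) hq
  refine ⟨a + (i + q * a - a) % q, by omega, by omega, ?_⟩
  calc a + (i + q * a - a) % q ≡ a + (i + q * a - a) [MOD q] :=
        Nat.ModEq.add_left a (Nat.mod_modEq _ _)
    _ = i + q * a := by omega
    _ ≡ i [MOD q] := by simp [Nat.ModEq]

/-- Every position of `W` is congruent modulo `q` to a position of the first `q` letters of `v`,
where both periods can be read off. -/
lemma HasPeriod.of_infix {W v : List X} {p q : ℕ} (hW : HasPeriod W q) (hv : HasPeriod v p)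
    (hvW : v <:+: W) (hlen : q + p ≤ v.length) : HasPeriod W p := by
  obtain ⟨L, R, rfl⟩ := hvW
  have hWv : ∀ t < v.length, (L ++ v ++ R)[L.length + t]? = v[t]? := fun t ht => by
    rw [List.append_assoc, List.getElem?_append_right (by omega), Nat.add_sub_cancel_left,
      List.getElem?_append_left ht]
  have hWlen : (L ++ v ++ R).length = L.length + v.length + R.length := by simp; omega
  refine ⟨hv.1, fun i hi => ?_⟩
  obtain ⟨j, hLj, hjq, hji⟩ := exists_modEq_of_le_lt_add i L.length hW.1
  obtain ⟨t, rfl⟩ := Nat.exists_eq_add_of_le hLj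
  calc (L ++ v ++ R)[i + p]? = (L ++ v ++ R)[L.length + t + p]? :=
        hW.getElem?_eq_of_modEq (hji.symm.add_right p) hi (by omega)
    _ = (L ++ v ++ R)[L.length + t]? := by
        rw [Nat.add_assoc, hWv _ (by omega), hWv _ (by omega)]
        exact hv.2 t (by omega)
    _ = (L ++ v ++ R)[i]? := hW.getElem?_eq_of_modEq hji (by omega) (by omega)

lemma hasPeriod_length_of_prefix_append {u z : List X} (hz : z ≠ []) (h : u <+: z ++ u) :
    HasPeriod u z.length := by
  refine ⟨List.length_pos_iff.2 hz, fun i hi => ?_⟩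
  have hz := List.prefix_iff_getElem?.1 h (i + z.length) hi
  rw [List.getElem?_append_right (by omega), Nat.add_sub_cancel] at hz
  rw [List.getElem?_eq_getElem hi, ← hz]

lemma hasPeriod_iterM (hg : NonErasing g) {w : List X} {p : ℕ} (h : HasPeriod w p) (hw : w ≠ [])
    (k : ℕ) : HasPeriod (iterM g k w) (iterM g k (w.take p)).length := by
  obtain ⟨hp, hlist⟩ := hasPeriod_iff_list_hasPeriod.1 h
  refine hasPeriod_length_of_prefix_append (hg.iterM_ne_nil ?_ k) ?_
  · simpa [List.take_eq_nil_iff] using ⟨hp.ne', hw⟩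
  · rw [← iterM_append]
    exact prefix_iterM hlist g k

lemma hasPeriod_iterM_of_infix [Fintype X] (hg : NonErasing g) {V : List X} {k p : ℕ}
    (hV : V <:+: iterM g k V) (hp : HasPeriod V p) (hlen : p * (Mg g ^ k + 1) ≤ V.length) :
    HasPeriod (iterM g k V) p := by
  have hVne : V ≠ [] := by
    rintro rfl
    simp [hp.1.ne'] at hlen
  refine (hasPeriod_iterM hg hp hVne k).of_infix hp hV ?_
  calc (iterM g k (V.take p)).length + p ≤ Mg g ^ k * p + p := by
        gcongr
        exact (length_iterM_le g k _).trans (Nat.mul_le_mul_left _ (List.length_take_le _ _))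
    _ = p * (Mg g ^ k + 1) := by ring
    _ ≤ V.length := hlen

lemma hasPeriod_iterM_mul_of_infix [Fintype X] (hg : NonErasing g) {V : List X} {k p : ℕ}
    (hV : V <:+: iterM g k V) (hp : HasPeriod V p) (hlen : p * (Mg g ^ k + 1) ≤ V.length)
    (m : ℕ) : HasPeriod (iterM g (k * m) V) p := by
  induction m with
  | zero => exact hp
  | succ m ih =>
    have hW : iterM g (k * m) V <:+: iterM g k (iterM g (k * m) V) := by
      rw [← iterM_add, Nat.add_comm, iterM_add]
      exact infix_iterM hV g (k * m)
    rw [Nat.mul_succ, Nat.add_comm, iterM_add]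
    exact hasPeriod_iterM_of_infix hg hW ih (hlen.trans (hg.length_le_length_iterM V _))

end Periods

section Looping

variable {g : X → List X}

lemma OmegaExists.exists_isOmega {x : X} (hx : OmegaExists g x) : ∃ s, IsOmega g x s := by
  have hstep : ∀ j, iterM g j [x] <+: iterM g (j + 1) [x] := fun j => by
    rw [iterM_succ, applyM_singleton]
    exact prefix_iterM hx.1 g j
  have hmono : ∀ i j, i ≤ j → iterM g i [x] <+: iterM g j [x] := fun i j hij => by
    induction j, hij using Nat.le_induction with
    | base => exact List.prefix_refl _
    | succ j _ ih => exact ih.trans (hstep j)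
  choose J hJ using fun i => (hx.2.eventually_gt_atTop i).exists
  refine ⟨fun i => (iterM g (J i) [x])[i]'(hJ i), hx, fun j i hi => ?_⟩
  rcases le_total j (J i) with hle | hle
  · exact (hmono _ _ hle).getElem hi
  · exact ((hmono _ _ hle).getElem (hJ i)).symm

lemma IsOmega.isPeriodicWord {x : X} {s : ℕ → X} {p : ℕ} (hs : IsOmega g x s)
    (hper : ∀ j, HasPeriod (iterM g j [x]) p) :
    IsPeriodicWord s (List.ofFn fun i : Fin p => s i) := by
  have hp := (hper 0).1
  refine ⟨by simpa using hp.ne', fun i hi => ?_⟩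
  obtain ⟨j, hj⟩ := (hs.1.2.eventually_gt_atTop i).exists
  have hmod := (hasPeriod_iff_list_hasPeriod.1 (hper j)).2.getElem?_mod p i _ hj
  have hjp : i % p < (iterM g j [x]).length := (Nat.mod_le i p).trans_lt hj
  rw [List.getElem?_eq_getElem hjp, List.getElem?_eq_getElem hj, hs.2 j, hs.2 j] at hmod
  simpa using (Option.some.inj hmod).symm

theorem looping_of_forall_hasPeriod_iterM_mul [Finite X] (hgrow : Growing g) {V : List X}
    {k p : ℕ} (hk : 0 < k) (hV : V ≠ []) (hper : ∀ m, HasPeriod (iterM g (k * m) V) p) :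
    Looping g := by
  have hg := hgrow.nonErasing
  have hhead : ∀ m, ∃ c, [c] <+: iterM g (k * m) V := fun m => by
    obtain ⟨c, t, hct⟩ := List.exists_cons_of_ne_nil (hg.iterM_ne_nil hV (k * m))
    exact ⟨c, t, hct.symm⟩
  choose c hc using hhead
  obtain ⟨m₀, m₁, hlt, hcc⟩ :=
    Set.Finite.exists_lt_map_eq_of_forall_mem (fun m => Set.mem_univ (c m)) Set.finite_univ
  obtain ⟨κ, hκ, rfl⟩ : ∃ κ, 0 < κ ∧ m₁ = m₀ + κ := ⟨m₁ - m₀, by omega, by omega⟩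
  have hk' : 0 < k * κ := Nat.mul_pos hk hκ
  have hshift : ∀ j, iterM g (k * κ * j) (iterM g (k * m₀) V) = iterM g (k * (m₀ + κ * j)) V :=
    fun j => by rw [← iterM_add]; congr 1; ring
  have ha : [c m₀] <+: iterM g (k * κ) [c m₀] := by
    have h1 := prefix_iterM (hc m₀) g (k * κ)
    rw [← Nat.mul_one (k * κ), hshift] at h1
    simp only [Nat.mul_one] at h1
    refine List.prefix_of_prefix_length_le (hcc ▸ hc (m₀ + κ)) h1 ?_
    exact List.length_pos_iff.2 (hg.iterM_ne_nil (List.cons_ne_nil _ []) _)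
  have hω : OmegaExists (powM g (k * κ)) (c m₀) := by
    refine ⟨ha, ?_⟩
    simp_rw [iterM_powM]
    exact (hgrow _).comp (tendsto_atTop_mono (fun j => Nat.le_mul_of_pos_left j hk') tendsto_id)
  obtain ⟨s, hs⟩ := hω.exists_isOmega
  refine ⟨k * κ, hk', c m₀, _, s, hs, hs.isPeriodicWord (p := p) fun j => ?_⟩
  rw [iterM_powM]
  exact (hper _).prefix (hshift j ▸ prefix_iterM (hc m₀) g _)

end Looping

section HeavyPath

variable {g : X → List X}

lemma mem_iterM_of_path {z : ℕ → X} {d : ℕ} (hz : ∀ j < d, z (j + 1) ∈ g (z j)) {i t : ℕ}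
    (h : i + t ≤ d) : z (i + t) ∈ iterM g t [z i] := by
  induction t with
  | zero => simp [iterM]
  | succ t ih => exact mem_iterM_succ (ih (by omega)) (hz _ (by omega))

lemma exists_heavy_path [Fintype X] (hg : NonErasing g) (d : ℕ) (x : X) :
    ∃ z : ℕ → X, z 0 = x ∧ (∀ j < d, z (j + 1) ∈ g (z j)) ∧
      ∀ j ≤ d, (iterM g d [x]).length ≤ Mg g ^ j * (iterM g (d - j) [z j]).length := by
  induction d generalizing x with
  | zero => exact ⟨fun _ => x, rfl, by simp, fun j hj => by simp [Nat.le_zero.1 hj]⟩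
  | succ d ih =>
    obtain ⟨y, hy, hxy⟩ := exists_mem_length_iterM_le g d (hg x)
    obtain ⟨z, hz0, hz, hbound⟩ := ih y
    refine ⟨fun | 0 => x | j + 1 => z j, rfl, ?_, ?_⟩
    · rintro (_ | j) hj
      · simpa [hz0] using hy
      · exact hz j (by omega)
    · rintro (_ | j) hj
      · simp
      · calc (iterM g (d + 1) [x]).length ≤ (g x).length * (iterM g d [y]).length := by
              rwa [iterM_succ, applyM_singleton]
          _ ≤ Mg g * (Mg g ^ j * (iterM g (d - j) [z j]).length) :=
              Nat.mul_le_mul (length_le_Mg g x) (hbound j (by omega))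
          _ = Mg g ^ (j + 1) * (iterM g (d + 1 - (j + 1)) [z j]).length := by
              rw [Nat.add_sub_add_right]; ring

lemma exists_lt_le_card_eq [Fintype X] (z : ℕ → X) :
    ∃ A B, A < B ∧ B ≤ Fintype.card X ∧ z A = z B := by
  obtain ⟨i, j, hij, h⟩ := Fintype.exists_ne_map_eq_of_card_lt
    (fun j : Fin (Fintype.card X + 1) => z j) (by simp)
  rcases Fin.lt_or_lt_of_ne hij with hlt | hlt
  · exact ⟨i, j, hlt, by omega, h⟩
  · exact ⟨j, i, hlt, by omega, h.symm⟩

theorem looping_of_two_mul_pow_card_lt [Fintype X] (hgrow : Growing g) {x : X} {d p : ℕ}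
    (hp : HasPeriod (iterM g d [x]) p)
    (hlen : 2 * p * Mg g ^ Fintype.card X < (iterM g d [x]).length) : Looping g := by
  have hg := hgrow.nonErasing
  have hM : 0 < Mg g := hg.Mg_pos x
  have hpow : ∀ {j}, j ≤ Fintype.card X → Mg g ^ j ≤ Mg g ^ Fintype.card X :=
    Nat.pow_le_pow_right hM
  have hnd : Fintype.card X ≤ d := by
    by_contra! hdn
    have hw : (iterM g d [x]).length ≤ Mg g ^ Fintype.card X := by
      simpa using (length_iterM_le g d [x]).trans (Nat.mul_le_mul_right 1 (hpow hdn.le))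
    nlinarith [hp.1]
  obtain ⟨z, rfl, hz, hbound⟩ := exists_heavy_path hg d x
  obtain ⟨A, B, hAB, hBn, hzAB⟩ := exists_lt_le_card_eq z
  set V := iterM g (d - A) [z A]
  have hVw : V <:+: iterM g d [z 0] := by
    have hmem := mem_iterM_of_path hz (i := 0) (t := A) (by omega)
    have := iterM_singleton_infix_of_mem g hmem (d - A)
    rwa [← iterM_add, Nat.sub_add_cancel (by omega), Nat.zero_add] at this
  have hVk : V <:+: iterM g (B - A) V := by
    have hmem := mem_iterM_of_path hz (i := A) (t := B - A) (by omega)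
    rw [Nat.add_sub_cancel' hAB.le, ← hzAB] at hmem
    have := iterM_singleton_infix_of_mem g hmem (d - A)
    rwa [← iterM_add, Nat.add_comm, iterM_add] at this
  have hVlen : p * (Mg g ^ (B - A) + 1) ≤ V.length := by
    have hMB : Mg g ^ A * Mg g ^ (B - A) = Mg g ^ B := by
      rw [← pow_add, Nat.add_sub_cancel' hAB.le]
    have h2 : Mg g ^ A * (p * (Mg g ^ (B - A) + 1)) ≤ 2 * p * Mg g ^ Fintype.card X := by
      nlinarith [hpow hBn, hpow (hAB.le.trans hBn)]
    exact (Nat.lt_of_mul_lt_mul_left (h2.trans_lt (hlen.trans_le (hbound A (by omega))))).le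
  exact looping_of_forall_hasPeriod_iterM_mul hgrow (Nat.sub_pos_of_lt hAB)
    (hg.iterM_ne_nil (List.cons_ne_nil _ _) _)
    (hasPeriod_iterM_mul_of_infix hg hVk (hp.infix hVw) hVlen)

end HeavyPath

/-- If `g` is growing and loop-free on an alphabet with `n` letters,
then `PER(g^d(x)) ≥ |g^d(x)| / (2 M_g^n)` for every letter `x` and every `d ≥ 1`. -/
theorem loopFree_per_lower_bound {X : Type*} [Fintype X]
    (n : ℕ) (hn : n = Fintype.card X)
    (g : X → List X) (hgrow : Growing g) (hlf : LoopFree g) :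
    ∀ (x : X) (d : ℕ), 0 < d →
      ((iterM g d [x]).length : ℝ) / (2 * (Mg g : ℝ) ^ n) ≤ (PER (iterM g d [x]) : ℝ) := by
  intro x d _
  subst hn
  have hw := hgrow.nonErasing.iterM_ne_nil (List.cons_ne_nil x []) d
  have hM : (0 : ℝ) < Mg g := Nat.cast_pos.2 (hgrow.nonErasing.Mg_pos x)
  have key : (iterM g d [x]).length ≤ 2 * PER (iterM g d [x]) * Mg g ^ Fintype.card X :=
    not_lt.1 fun h => hlf (looping_of_two_mul_pow_card_lt hgrow (hasPeriod_PER hw) h)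
  rw [div_le_iff₀ (by positivity)]
  calc ((iterM g d [x]).length : ℝ)
        ≤ 2 * PER (iterM g d [x]) * (Mg g : ℝ) ^ Fintype.card X := by exact_mod_cast key
    _ = _ := by ring
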